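/- Let G be a connected graph with at least two vertices that has no true twins, and let K_2 be the complete graph with vertex set {1,2}. Then for every function k : V(G) → {1,2}, the set S = {(g, k(g)) : g ∈ V(G)} is a resolving set of the lexicographic product G∘K_2. -/

import Mathlib

/-- The lexicographic product of two simple graphs. -/
def lexProd {α β : Type*} (G : SimpleGraph α) (H : SimpleGraph β) :
    SimpleGraph (α × β) where
  Adj p q := G.Adj p.1 q.1 ∨ (p.1 = q.1 ∧ H.Adj p.2 q.2)
  symm := ⟨by
    rintro ⟨g, h⟩ ⟨g', h'⟩ (hg | ⟨rfl, hh⟩)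
    · exact Or.inl hg.symm
    · exact Or.inr ⟨rfl, hh.symm⟩⟩
  loopless := ⟨by
    rintro ⟨g, h⟩ (hg | ⟨-, hh⟩)
    · exact G.irrefl hg
    · exact H.irrefl hh⟩

/-- `W` is a resolving set of `G`. -/
def IsResolvingSet {α : Type*} (G : SimpleGraph α) (W : Set α) : Prop :=
  ∀ x y : α, x ≠ y → ∃ z ∈ W, G.dist x z ≠ G.dist y z

/-- `S` is a locating set of `G`. -/
def IsLocatingSet {α : Type*} (G : SimpleGraph α) (S : Set α) : Prop :=
  ∀ u ∉ S, ∀ v ∉ S, u ≠ v → G.neighborSet u ∩ S ≠ G.neighborSet v ∩ S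

/-- `S` is a strictly locating set of `G`. -/
def IsStrictlyLocatingSet {α : Type*} (G : SimpleGraph α) (S : Set α) : Prop :=
  IsLocatingSet G S ∧ ∀ u ∉ S, G.neighborSet u ∩ S ≠ S

/-- `S` is a dominating set of `G`. -/
def IsDominatingSet {α : Type*} (G : SimpleGraph α) (S : Set α) : Prop :=
  ∀ v ∉ S, ∃ u ∈ S, G.Adj v u

/-- `u` and `v` are true twins in `G`. -/
def AreTrueTwins {α : Type*} (G : SimpleGraph α) (u v : α) : Prop :=
  G.Adj u v ∧ G.neighborSet u \ {v} = G.neighborSet v \ {u}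

/-- `u` and `v` are false twins in `G`. -/
def AreFalseTwins {α : Type*} (G : SimpleGraph α) (u v : α) : Prop :=
  u ≠ v ∧ ¬ G.Adj u v ∧ G.neighborSet u \ {v} = G.neighborSet v \ {u}

/-- The path on `n` vertices `0, 1, …, n-1` (vertex `i` represents the
vertex labelled `i+1` in `{1, …, n}`). -/
def PathG (n : ℕ) : SimpleGraph (Fin n) where
  Adj i j := (i : ℕ) + 1 = (j : ℕ) ∨ (j : ℕ) + 1 = (i : ℕ)
  symm := ⟨fun i j h => Or.symm h⟩
  loopless := ⟨fun i h => by rcases h with h | h <;> omega⟩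

/-- The cycle on `n` vertices `0, 1, …, n-1` (vertex `i` represents the
vertex labelled `i+1` in `{1, …, n}`). -/
def CycleG (n : ℕ) : SimpleGraph (Fin n) where
  Adj i j := i ≠ j ∧ (((i : ℕ) + 1) % n = (j : ℕ) ∨ ((j : ℕ) + 1) % n = (i : ℕ))
  symm := ⟨fun i j h => ⟨h.1.symm, Or.symm h.2⟩⟩
  loopless := ⟨fun i h => h.1 rfl⟩

/-- The metric dimension of `G`: the minimum cardinality of a resolving set. -/
noncomputable def metricDim {α : Type*} [Fintype α] (G : SimpleGraph α) : ℕ :=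
  sInf {n | ∃ W : Finset α, W.card = n ∧ IsResolvingSet G ↑W}

/-- The set `W ⊆ Fin n` contains the vertex with underlying value `k`. -/
def valMem {n : ℕ} (W : Set (Fin n)) (k : ℕ) : Prop :=
  ∃ x ∈ W, (x : ℕ) = k

/-
The vertices `(g, k g)` of the section see every vertex `(g', h')` of `G ∘ H` at distance
`d_G(g', g)` when `g' ≠ g`, and at distance `0` or `1` when `g' = g`. Two vertices in one
layer are therefore told apart by the section vertex of that layer, since `K₂` has only two
vertices. Vertices in non-adjacent layers are told apart by the section vertex of either
layer (distance `≤ 1` against `≥ 2`). For adjacent layers `g, g'`, not being true twins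
yields a vertex `u` adjacent to exactly one of them, and `(u, k u)` is at distance `1` from
one vertex and not from the other.
-/

namespace SimpleGraph

variable {α β : Type*} {G : SimpleGraph α} {H : SimpleGraph β}

def lexProdLayer (G : SimpleGraph α) (H : SimpleGraph β) (h : β) : G →g lexProd G H where
  toFun g := (g, h)
  map_rel' := Or.inl

lemma exists_lexProd_walk_length_le {g w : α} (p : G.Walk g w) (hne : g ≠ w) (h h' : β) :
    ∃ q : (lexProd G H).Walk (g, h) (w, h'), q.length ≤ p.length := by
  cases p with
  | nil => exact absurd rfl hne
  | cons e p =>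
    exact ⟨.cons (Or.inl e) (p.map (lexProdLayer G H h')),
      (congrArg (· + 1) (p.length_map _)).le⟩

lemma exists_walk_fst_length_le {x y : α × β} (p : (lexProd G H).Walk x y) :
    ∃ q : G.Walk x.1 y.1, q.length ≤ p.length := by
  induction p with
  | nil => exact ⟨.nil, le_rfl⟩
  | cons e _ ih =>
    obtain ⟨q, hq⟩ := ih
    rcases e with he | ⟨heq, -⟩
    · exact ⟨.cons he q, Nat.succ_le_succ hq⟩
    · exact ⟨q.copy heq.symm rfl,
      (Walk.length_copy _ _ _).trans_le (Nat.le_succ_of_le hq)⟩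

lemma lexProd_dist_of_fst_ne {g w : α} (hne : g ≠ w) (h h' : β) :
    (lexProd G H).dist (g, h) (w, h') = G.dist g w := by
  by_cases hr : G.Reachable g w
  · obtain ⟨p, hp⟩ := hr.exists_walk_length_eq_dist
    obtain ⟨q, hq⟩ := exists_lexProd_walk_length_le (H := H) p hne h h'
    obtain ⟨q', hq'⟩ := Reachable.exists_walk_length_eq_dist ⟨q⟩
    obtain ⟨p', hp'⟩ := exists_walk_fst_length_le q'
    exact le_antisymm ((dist_le q).trans (hp ▸ hq)) ((dist_le p').trans (hq' ▸ hp'))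
  · rw [dist_eq_zero_of_not_reachable hr, dist_eq_zero_of_not_reachable]
    rintro ⟨q⟩
    exact hr ⟨(exists_walk_fst_length_le q).choose⟩

lemma lexProd_top_dist_of_fst_eq [DecidableEq β] (g : α) (h h' : β) :
    (lexProd G ⊤).dist (g, h) (g, h') = if h = h' then 0 else 1 := by
  split_ifs with hh
  · rw [hh, dist_self]
  · exact dist_eq_one_iff_adj.mpr (Or.inr ⟨rfl, hh⟩)

lemma exists_adj_iff_not_of_not_areTrueTwins {g g' : α} (hadj : G.Adj g g')
    (htw : ¬AreTrueTwins G g g') :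
    ∃ u, u ≠ g ∧ u ≠ g' ∧ ¬(G.Adj g u ↔ G.Adj g' u) := by
  by_contra! hall
  refine htw ⟨hadj, Set.ext fun u => ?_⟩
  simp only [Set.mem_sdiff, mem_neighborSet, Set.mem_singleton_iff]
  by_cases hug : u = g
  · subst hug; simp
  by_cases hug' : u = g'
  · subst hug'; simp
  simp [hug, hug', hall u hug hug']

end SimpleGraph

open SimpleGraph in
theorem stmt4_general {α : Type*} (G : SimpleGraph α) (hG : G.Connected)
    (htf : ∀ u v : α, ¬ AreTrueTwins G u v) (k : α → Fin 2) :
    IsResolvingSet (lexProd G (⊤ : SimpleGraph (Fin 2)))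
      (Set.range fun g => (g, k g)) := by
  rintro ⟨g, h⟩ ⟨g', h'⟩ hne
  rcases eq_or_ne g g' with rfl | hgg
  · refine ⟨(g, k g), ⟨g, rfl⟩, ?_⟩
    have hh : h ≠ h' := fun e => hne (e ▸ rfl)
    rw [lexProd_top_dist_of_fst_eq, lexProd_top_dist_of_fst_eq]
    split_ifs <;> omega
  by_cases hadj : G.Adj g g'
  · obtain ⟨u, hug, hug', hu⟩ := exists_adj_iff_not_of_not_areTrueTwins hadj (htf g g')
    refine ⟨(u, k u), ⟨u, rfl⟩, fun hd => hu ?_⟩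
    rw [lexProd_dist_of_fst_ne hug.symm, lexProd_dist_of_fst_ne hug'.symm] at hd
    rw [← dist_eq_one_iff_adj, ← dist_eq_one_iff_adj, hd]
  · refine ⟨(g, k g), ⟨g, rfl⟩, ?_⟩
    have hfar := hG.one_lt_dist_of_ne_of_not_adj hgg.symm (fun e => hadj e.symm)
    rw [lexProd_top_dist_of_fst_eq, lexProd_dist_of_fst_ne hgg.symm]
    split_ifs <;> omega

/-- If `G` is connected, nontrivial, and free of true twins, then picking one
vertex from each `K₂`-layer yields a resolving set of `G ∘ K₂`. -/
theorem stmt4 {α : Type*} (G : SimpleGraph α) (hG : G.Connected) [Nontrivial α]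
    (htf : ∀ u v : α, ¬ AreTrueTwins G u v) (k : α → Fin 2) :
    IsResolvingSet (lexProd G (⊤ : SimpleGraph (Fin 2)))
      (Set.range fun g => (g, k g)) :=
  stmt4_general G hG htf k
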